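/- arXiv:1608.08098 — 6 statements merged into one kernel-verified Lean document; each statement's English description precedes it below -/
import Mathlib

section
/- In the cyclotomic Birman–Murakami–Wenzl algebra B_{d,n}, the Jucys–Murphy elements X_1, X_2, …, X_n defined by the generator X_1 together with X_{i+1} := T_i X_i T_i (i = 1, …, n−1) pairwise commute: X_i X_j = X_j X_i for all 1 ≤ i, j ≤ n. -/
open scoped BigOperators

/-- The cyclotomic Birman–Murakami–Wenzl algebra data: elements of a `K`-algebra `A`
satisfying the defining relations of `B_{d,n}`. -/
structure CBMW (K : Type*) [Field K] (A : Type*) [Ring A] [Algebra K A]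
    (d n : ℕ) (δ : ℕ → K) (ρ q : K) (v : Fin d → K) where
  T : ℕ → A
  Tinv : ℕ → A
  X₁ : A
  X₁inv : A
  E : ℕ → A
  rho_ne : ρ ≠ 0
  q_ne : q ≠ 0
  qq_ne : q - q⁻¹ ≠ 0
  v_ne : ∀ i, v i ≠ 0
  param : ρ - ρ⁻¹ = (q - q⁻¹) * (δ 0 - 1)
  TTinv : ∀ i, 1 ≤ i → i ≤ n - 1 → T i * Tinv i = 1
  TinvT : ∀ i, 1 ≤ i → i ≤ n - 1 → Tinv i * T i = 1
  XXinv : X₁ * X₁inv = 1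
  XinvX : X₁inv * X₁ = 1
  Esq : ∀ i, 1 ≤ i → i ≤ n - 1 → E i * E i = δ 0 • E i
  braid : ∀ i, 1 ≤ i → i + 1 ≤ n - 1 → T i * T (i + 1) * T i = T (i + 1) * T i * T (i + 1)
  Tcomm : ∀ i j, 1 ≤ i → j ≤ n - 1 → i + 2 ≤ j → T i * T j = T j * T i
  XTXT : 1 ≤ n - 1 → X₁ * T 1 * X₁ * T 1 = T 1 * X₁ * T 1 * X₁
  XTcomm : ∀ j, 2 ≤ j → j ≤ n - 1 → X₁ * T j = T j * X₁
  EEEup : ∀ i, 1 ≤ i → i + 1 ≤ n - 1 → E i * E (i + 1) * E i = E i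
  EEEdown : ∀ i, 1 ≤ i → i + 1 ≤ n - 1 → E (i + 1) * E i * E (i + 1) = E (i + 1)
  TTEup : ∀ i, 1 ≤ i → i + 1 ≤ n - 1 → T i * T (i + 1) * E i = E (i + 1) * E i
  TTEdown : ∀ i, 1 ≤ i → i + 1 ≤ n - 1 → T (i + 1) * T i * E (i + 1) = E i * E (i + 1)
  ETTup : ∀ i, 1 ≤ i → i + 1 ≤ n - 1 → E i * T (i + 1) * T i = E i * E (i + 1)
  ETTdown : ∀ i, 1 ≤ i → i + 1 ≤ n - 1 → E (i + 1) * T i * T (i + 1) = E (i + 1) * E i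
  EXE : ∀ j, 1 ≤ j → j ≤ d - 1 → E 1 * X₁ ^ j * E 1 = δ j • E 1
  skein : ∀ i, 1 ≤ i → i ≤ n - 1 → T i - Tinv i = (q - q⁻¹) • (1 - E i)
  TE : ∀ i, 1 ≤ i → i ≤ n - 1 → T i * E i = ρ⁻¹ • E i
  ET : ∀ i, 1 ≤ i → i ≤ n - 1 → E i * T i = ρ⁻¹ • E i
  unwrapl : 1 ≤ n - 1 → E 1 * X₁ * T 1 * X₁ = ρ • E 1
  unwrapr : 1 ≤ n - 1 → X₁ * T 1 * X₁ * E 1 = ρ • E 1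
  cyclo : (List.ofFn fun i : Fin d => X₁ - algebraMap K A (v i)).prod = 0

variable {K : Type*} [Field K] {A : Type*} [Ring A] [Algebra K A]
  {d n : ℕ} {δ : ℕ → K} {ρ q : K} {v : Fin d → K}

/-- The Jucys–Murphy elements `X_1, X_2, …` of the cyclotomic BMW algebra,
defined by `X_{i+1} = T_i X_i T_i` (with the convention `X 0 = 1`). -/
def CBMW.X (B : CBMW K A d n δ ρ q v) : ℕ → A
  | 0 => 1
  | 1 => B.X₁
  | k + 2 => B.T (k + 1) * CBMW.X B (k + 1) * B.T (k + 1)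

private lemma cbmw_cont {A : Type*} [Ring A] {x y : A} (h : x * y = y * x) (z : A) :
    x * (y * z) = y * (x * z) := by
  rw [← mul_assoc, h, mul_assoc]

private lemma cbmw_cont3 {A : Type*} [Ring A] {a b c d e f : A} (h : a * b * c = d * e * f)
    (z : A) : a * (b * (c * z)) = d * (e * (f * z)) := by
  rw [← mul_assoc, ← mul_assoc, h, mul_assoc, mul_assoc]

private lemma cbmw_cont4 {A : Type*} [Ring A] {a b c d e f g k : A}
    (h : a * b * c * d = e * f * g * k) (z : A) :
    a * (b * (c * (d * z))) = e * (f * (g * (k * z))) := by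
  rw [← mul_assoc, ← mul_assoc, ← mul_assoc, h, mul_assoc, mul_assoc, mul_assoc]

/-- `T j` commutes with `X i` when `j ≥ i + 1`. -/
lemma cbmw_Tcomm_hi {K : Type*} [Field K] {A : Type*} [Ring A] [Algebra K A]
    {d n : ℕ} {δ : ℕ → K} {ρ q : K} {v : Fin d → K} (B : CBMW K A d n δ ρ q v) :
    ∀ i j, 1 ≤ i → i + 1 ≤ j → j ≤ n - 1 → B.T j * B.X i = B.X i * B.T j := by
  intro i
  induction i with
  | zero => intro j h1 _ _; omega
  | succ k ih =>
    intro j h1 h2 h3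
    match k, ih with
    | 0, _ => exact (B.XTcomm j (by omega) h3).symm
    | m + 1, ih =>
      show B.T j * (B.T (m+1) * B.X (m+1) * B.T (m+1))
          = B.T (m+1) * B.X (m+1) * B.T (m+1) * B.T j
      have hT : B.T j * B.T (m+1) = B.T (m+1) * B.T j :=
        (B.Tcomm (m+1) j (by omega) h3 (by omega)).symm
      have hX : B.T j * B.X (m+1) = B.X (m+1) * B.T j := ih j (by omega) (by omega) h3
      simp only [mul_assoc]
      rw [cbmw_cont hT, cbmw_cont hX, hT]

/-- The braid-type relation `X_i T_i X_i T_i = T_i X_i T_i X_i` for all `i`. -/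
lemma cbmw_braidX {K : Type*} [Field K] {A : Type*} [Ring A] [Algebra K A]
    {d n : ℕ} {δ : ℕ → K} {ρ q : K} {v : Fin d → K} (B : CBMW K A d n δ ρ q v) :
    ∀ i, 1 ≤ i → i ≤ n - 1 → B.X i * B.T i * B.X i * B.T i = B.T i * B.X i * B.T i * B.X i := by
  intro i
  induction i with
  | zero => intro h1 _; omega
  | succ k ih =>
    intro h1 h2
    match k, ih with
    | 0, _ => exact B.XTXT h2
    | m + 1, ih =>
      -- abbreviations: a = T (m+1), b = T (m+2), y = X (m+1)
      have hbr : B.T (m+1) * B.T (m+2) * B.T (m+1) = B.T (m+2) * B.T (m+1) * B.T (m+2) :=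
        B.braid (m+1) (by omega) (by omega)
      have br0 : B.T (m+1) * (B.T (m+2) * B.T (m+1))
          = B.T (m+2) * (B.T (m+1) * B.T (m+2)) := by
        simpa only [mul_assoc] using hbr
      have cby : B.T (m+2) * B.X (m+1) = B.X (m+1) * B.T (m+2) :=
        cbmw_Tcomm_hi B (m+1) (m+2) (by omega) (by omega) (by omega)
      have hih := ih (by omega) (by omega)
      show B.T (m+1) * B.X (m+1) * B.T (m+1) * B.T (m+2)
            * (B.T (m+1) * B.X (m+1) * B.T (m+1)) * B.T (m+2)
          = B.T (m+2) * (B.T (m+1) * B.X (m+1) * B.T (m+1)) * B.T (m+2)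
            * (B.T (m+1) * B.X (m+1) * B.T (m+1))
      simp only [mul_assoc]
      rw [cbmw_cont3 hbr (B.X (m+1) * (B.T (m+1) * B.T (m+2))),
          cbmw_cont cby (B.T (m+1) * B.T (m+2)),
          ← cbmw_cont cby (B.T (m+1) * (B.X (m+1) * (B.T (m+2) * (B.T (m+1) * B.T (m+2))))),
          ← br0,
          cbmw_cont4 hih (B.T (m+2) * B.T (m+1)),
          cbmw_cont3 hbr (B.X (m+1) * (B.T (m+1) * (B.X (m+1) * (B.T (m+2) * B.T (m+1))))),
          cbmw_cont cby (B.T (m+1) * (B.X (m+1) * (B.T (m+2) * B.T (m+1)))),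
          ← cbmw_cont cby (B.T (m+1)),
          ← cbmw_cont3 hbr (B.X (m+1) * B.T (m+1))]

/-- Commutation `X i * X j = X j * X i` for `i ≤ j`. -/
lemma cbmw_Xcomm_le {K : Type*} [Field K] {A : Type*} [Ring A] [Algebra K A]
    {d n : ℕ} {δ : ℕ → K} {ρ q : K} {v : Fin d → K} (B : CBMW K A d n δ ρ q v) :
    ∀ j, j ≤ n → ∀ i, i ≤ j → B.X i * B.X j = B.X j * B.X i := by
  intro j
  induction j with
  | zero =>
    intro _ i hi
    obtain rfl : i = 0 := by omega
    rfl
  | succ k ih =>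
    intro hk i hi
    rcases Nat.eq_or_lt_of_le hi with rfl | hlt
    · rfl
    have hik : i ≤ k := by omega
    rcases Nat.eq_zero_or_pos i with rfl | hi1
    · show (1 : A) * B.X (k+1) = B.X (k+1) * 1
      rw [one_mul, mul_one]
    rcases Nat.eq_or_lt_of_le hik with rfl | hlt2
    · -- j = i + 1 : use the braid-type relation
      obtain ⟨m, rfl⟩ : ∃ m, i = m + 1 := ⟨i - 1, by omega⟩
      have hb := cbmw_braidX B (m+1) (by omega) (by omega)
      show B.X (m+1) * (B.T (m+1) * B.X (m+1) * B.T (m+1))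
          = B.T (m+1) * B.X (m+1) * B.T (m+1) * B.X (m+1)
      simp only [mul_assoc] at hb ⊢
      exact hb
    · -- i + 1 ≤ k
      obtain ⟨m, rfl⟩ : ∃ m, k = m + 1 := ⟨k - 1, by omega⟩
      have hT : B.T (m+1) * B.X i = B.X i * B.T (m+1) :=
        cbmw_Tcomm_hi B i (m+1) hi1 (by omega) (by omega)
      have hX : B.X i * B.X (m+1) = B.X (m+1) * B.X i := ih (by omega) i (by omega)
      show B.X i * (B.T (m+1) * B.X (m+1) * B.T (m+1))
          = B.T (m+1) * B.X (m+1) * B.T (m+1) * B.X i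
      simp only [mul_assoc]
      rw [cbmw_cont hT.symm, cbmw_cont hX, hT.symm]

/-- the Jucys–Murphy elements of the cyclotomic BMW algebra pairwise commute. -/
theorem cbmw_jucysMurphy_commute
    {K : Type*} [Field K] {A : Type*} [Ring A] [Algebra K A]
    {d n : ℕ} {δ : ℕ → K} {ρ q : K} {v : Fin d → K}
    (B : CBMW K A d n δ ρ q v)
    (i j : ℕ) (hi1 : 1 ≤ i) (hin : i ≤ n) (hj1 : 1 ≤ j) (hjn : j ≤ n) :
    B.X i * B.X j = B.X j * B.X i := by
  rcases le_total i j with h | h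
  · exact cbmw_Xcomm_le B j hjn i h
  · exact (cbmw_Xcomm_le B i hin j h).symm
end

section
/- Let u, v ∈ K with u ≠ v, u + ρqv ≠ 0 and v + ρqu ≠ 0, and for 1 ≤ i ≤ n−1 set T_i(u,v) := T_i + ((q − q^{−1})u/(v − u))·1 + ((q − q^{−1})u/(u + ρqv))·E_i in B_{d,n}. Then T_i(u,v)·T_i(v,u) = ((u − q²v)(u − q^{−2}v)/(u − v)²)·1. -/
open scoped BigOperators

variable {K : Type*} [Field K] {A : Type*} [Ring A] [Algebra K A]
  {d n : ℕ} {δ : ℕ → K} {ρ q : K} {v : Fin d → K}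

/-!
Expanding the product with the quadratic relation `T_i² = 1 + (q - q⁻¹)T_i - (q - q⁻¹)ρ⁻¹E_i`
(the skein relation multiplied by `T_i`) together with `T_iE_i = E_iT_i = ρ⁻¹E_i` and
`E_i² = δ₀E_i` leaves a combination of `1`, `T_i` and `E_i`. The coefficient of `T_i` vanishes
by the choice of the constant terms, the coefficient of `E_i` vanishes by the relation between
`ρ`, `q` and `δ₀`, and the coefficient of `1` is the claimed scalar.
-/

theorem mul_self_eq_of_skein {T Tinv E : A} {c r : K} (hinv : T * Tinv = 1)
    (hskein : T - Tinv = c • (1 - E)) (hTE : T * E = r • E) :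
    T * T = 1 + c • T - (c * r) • E := by
  have h := congrArg (T * ·) hskein
  simp only [mul_sub, hinv, mul_smul_comm, mul_one, hTE] at h
  rw [smul_sub, smul_smul] at h
  rw [add_sub_assoc, ← h, add_sub_cancel]

theorem add_smul_one_add_smul_mul_add_smul_one_add_smul {T E : A} {c r δ : K}
    (hTT : T * T = 1 + c • T - (c * r) • E) (hTE : T * E = r • E) (hET : E * T = r • E)
    (hEE : E * E = δ • E) (a b x y : K) :
    (T + a • (1 : A) + x • E) * (T + b • (1 : A) + y • E) =
      (1 + a * b) • (1 : A) + (c + a + b) • T +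
        (x * y * δ + (x + y) * r + a * y + x * b - c * r) • E := by
  simp only [mul_add, add_mul, smul_mul_assoc, mul_smul_comm, one_mul, mul_one,
    hTT, hTE, hET, hEE, smul_smul]
  module

theorem add_div_sub_add_div_sub_eq_zero (c : K) {u v : K} (huv : u ≠ v) :
    c + c * u / (v - u) + c * v / (u - v) = 0 := by
  have hvu : v - u ≠ 0 := sub_ne_zero.mpr huv.symm
  have huv' : u - v ≠ 0 := sub_ne_zero.mpr huv
  field_simp
  ring

theorem one_add_div_sub_mul_div_sub {q u v : K} (hq : q ≠ 0) (huv : u ≠ v) :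
    1 + (q - q⁻¹) * u / (v - u) * ((q - q⁻¹) * v / (u - v)) =
      (u - q ^ 2 * v) * (u - q⁻¹ ^ 2 * v) / (u - v) ^ 2 := by
  have hvu : v - u ≠ 0 := sub_ne_zero.mpr huv.symm
  have huv' : u - v ≠ 0 := sub_ne_zero.mpr huv
  field_simp
  ring

/-- With `P = u + ρqv`, `Q = v + ρqu` and `c = q - q⁻¹`, the sum times `PQ/c` is
`uv(ρ - ρ⁻¹ + c) + uvc(ρq - 1) + ρ⁻¹(uQ + vP - PQ) = uv(ρq² - ρ⁻¹) + uv(ρ⁻¹ - ρq²)`,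
using `cδ = ρ - ρ⁻¹ + c` and `cq = q² - 1`. -/
theorem baxterized_coeff_E_eq_zero {ρ q δ u v : K} (hρ : ρ ≠ 0) (hq : q ≠ 0) (huv : u ≠ v)
    (h1 : u + ρ * q * v ≠ 0) (h2 : v + ρ * q * u ≠ 0)
    (hparam : ρ - ρ⁻¹ = (q - q⁻¹) * (δ - 1)) :
    (q - q⁻¹) * u / (u + ρ * q * v) * ((q - q⁻¹) * v / (v + ρ * q * u)) * δ
      + ((q - q⁻¹) * u / (u + ρ * q * v) + (q - q⁻¹) * v / (v + ρ * q * u)) * ρ⁻¹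
      + (q - q⁻¹) * u / (v - u) * ((q - q⁻¹) * v / (v + ρ * q * u))
      + (q - q⁻¹) * u / (u + ρ * q * v) * ((q - q⁻¹) * v / (u - v))
      - (q - q⁻¹) * ρ⁻¹ = 0 := by
  have hvu : v - u ≠ 0 := sub_ne_zero.mpr huv.symm
  have huv' : u - v ≠ 0 := sub_ne_zero.mpr huv
  have h1' : u + q * ρ * v ≠ 0 := by rwa [mul_comm q]
  have h2' : v + q * u * ρ ≠ 0 := by convert h2 using 2; ring
  field_simp
  field_simp at hparam
  linear_combination (-(q ^ 2 - 1) * u * v * (v - u) * (u - v)) * hparam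

/-- the Baxterized elements `T_i(u,v)` satisfy
`T_i(u,v) T_i(v,u) = ((u - q²v)(u - q⁻²v)/(u - v)²) · 1`. -/
theorem cbmw_baxterized_inverse
    {K : Type*} [Field K] {A : Type*} [Ring A] [Algebra K A]
    {d n : ℕ} {δ : ℕ → K} {ρ q : K} {vv : Fin d → K}
    (B : CBMW K A d n δ ρ q vv)
    (i : ℕ) (hi1 : 1 ≤ i) (hin : i ≤ n - 1)
    (u v : K) (huv : u ≠ v) (h1 : u + ρ * q * v ≠ 0) (h2 : v + ρ * q * u ≠ 0) :
    (B.T i + ((q - q⁻¹) * u / (v - u)) • (1 : A) + ((q - q⁻¹) * u / (u + ρ * q * v)) • B.E i) *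
      (B.T i + ((q - q⁻¹) * v / (u - v)) • (1 : A) + ((q - q⁻¹) * v / (v + ρ * q * u)) • B.E i)
      = ((u - q ^ 2 * v) * (u - (q⁻¹) ^ 2 * v) / (u - v) ^ 2) • (1 : A) := by
  have hTT := mul_self_eq_of_skein (B.TTinv i hi1 hin) (B.skein i hi1 hin) (B.TE i hi1 hin)
  rw [add_smul_one_add_smul_mul_add_smul_one_add_smul hTT (B.TE i hi1 hin) (B.ET i hi1 hin)
      (B.Esq i hi1 hin), add_div_sub_add_div_sub_eq_zero _ huv,
    baxterized_coeff_E_eq_zero B.rho_ne B.q_ne huv h1 h2 B.param,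
    one_add_div_sub_mul_div_sub B.q_ne huv, zero_smul, zero_smul, add_zero, add_zero]
end

section
/- Let λ be a d-partition of n and let T = (T_1, …, T_n) be an n-updown λ-tableau (necessarily every T_k is then obtained from T_{k−1} by adding one box). Then the associated integers satisfy p_1 = p_2 = ⋯ = p_n = 0; equivalently, at each step k, if T_k is obtained from T_{k−1} by adding a box ((i,j),s) and one sets m = j − i, then g_m^s computed from (T_1, …, T_{k−1}) equals 1. -/
/-- An `n`-updown `d`-tableau: a sequence of `d`-tuples of Young diagrams starting from the
empty `d`-partition, where at each step `k ∈ {1, …, n}` a single box `box k` is either added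
(`adds k = true`) or removed (`adds k = false`) from the component `(box k).2`. -/
structure UpDownTableau (d n : ℕ) where
  shape : ℕ → Fin d → YoungDiagram
  box : ℕ → (ℕ × ℕ) × Fin d
  adds : ℕ → Bool
  shape_zero : shape 0 = fun _ => ⊥
  step_add : ∀ k, 1 ≤ k → k ≤ n → adds k = true →
    (box k).1 ∉ shape (k - 1) (box k).2 ∧
    (shape k (box k).2).cells = insert (box k).1 (shape (k - 1) (box k).2).cells ∧
    ∀ s, s ≠ (box k).2 → shape k s = shape (k - 1) s
  step_remove : ∀ k, 1 ≤ k → k ≤ n → adds k = false →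
    (box k).1 ∉ shape k (box k).2 ∧
    (shape (k - 1) (box k).2).cells = insert (box k).1 (shape k (box k).2).cells ∧
    ∀ s, s ≠ (box k).2 → shape k s = shape (k - 1) s

namespace UpDownTableau

variable {d n : ℕ}

/-- `dcount t m s k` is the number of steps `r ∈ {1, …, m}` at which a box on the diagonal
`k` of component `s` is added; this is the sum `d_k^s` of the entries of the matrix
`m_s` on the `k`-th diagonal. -/
def dcount (t : UpDownTableau d n) (m : ℕ) (s : Fin d) (k : ℤ) : ℤ :=
  (((Finset.Icc 1 m).filter fun r =>
    t.adds r = true ∧ (t.box r).2 = s ∧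
      ((t.box r).1.2 : ℤ) - ((t.box r).1.1 : ℤ) = k).card : ℤ)

/-- `dbarcount t m s k` is the number of steps `r ∈ {1, …, m}` at which a box on the diagonal
`k` of component `s` is removed; this is the sum `d̄_k^s` of the entries of the matrix
`m̄_s` on the `k`-th diagonal. -/
def dbarcount (t : UpDownTableau d n) (m : ℕ) (s : Fin d) (k : ℤ) : ℤ :=
  (((Finset.Icc 1 m).filter fun r =>
    t.adds r = false ∧ (t.box r).2 = s ∧
      ((t.box r).1.2 : ℤ) - ((t.box r).1.1 : ℤ) = k).card : ℤ)

/-- The index `g_k^s = δ_{k,0} + d_{k-1}^s + d_{k+1}^s - 2 d_k^s` computed from the first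
`m` steps of the tableau. -/
def gIdx (t : UpDownTableau d n) (m : ℕ) (s : Fin d) (k : ℤ) : ℤ :=
  (if k = 0 then 1 else 0) + t.dcount m s (k - 1) + t.dcount m s (k + 1) - 2 * t.dcount m s k

/-- The index `ḡ_k^s = d̄_{k-1}^s + d̄_{k+1}^s - 2 d̄_k^s` computed from the first
`m` steps of the tableau. -/
def gbarIdx (t : UpDownTableau d n) (m : ℕ) (s : Fin d) (k : ℤ) : ℤ :=
  t.dbarcount m s (k - 1) + t.dbarcount m s (k + 1) - 2 * t.dbarcount m s k

/-- The diagonal of the box changed at step `k`. -/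
def diag (t : UpDownTableau d n) (k : ℕ) : ℤ :=
  ((t.box k).1.2 : ℤ) - ((t.box k).1.1 : ℤ)

/-- The integer `p_k` associated to an updown tableau: `p_k = 1 - g_{j-i}^s` (computed from
the first `k - 1` steps) if step `k` adds a box `((i,j),s)`, and `p_k = 1 - ḡ_{j-i}^s` if
step `k` removes a box `((i,j),s)`. -/
def p (t : UpDownTableau d n) (k : ℕ) : ℤ :=
  if t.adds k = true then 1 - t.gIdx (k - 1) (t.box k).2 (t.diag k)
  else 1 - t.gbarIdx (k - 1) (t.box k).2 (t.diag k)

end UpDownTableau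

open scoped BigOperators

open UpDownTableau

private lemma diag_filter_card (μ : YoungDiagram) (a b : ℕ) (c : ℤ)
    (hc : c = (b : ℤ) - (a : ℤ))
    (hab : (a, b) ∉ μ)
    (hcorner : 1 ≤ a → 1 ≤ b → (a - 1, b - 1) ∈ μ) :
    ((μ.cells.filter fun p => (p.2 : ℤ) - (p.1 : ℤ) = c).card : ℤ) = (min a b : ℤ) := by
  subst hc
  have hset : (μ.cells.filter fun p => (p.2 : ℤ) - (p.1 : ℤ) = (b : ℤ) - (a : ℤ))
      = (Finset.range (min a b)).image (fun t => (a - min a b + t, b - min a b + t)) := by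
    ext ⟨x, y⟩
    simp only [Finset.mem_filter, YoungDiagram.mem_cells, Finset.mem_image, Finset.mem_range]
    constructor
    · rintro ⟨hmem, hdiag⟩
      have hor : x < a ∨ y < b := by
        by_contra hcon
        push_neg at hcon
        exact hab (μ.up_left_mem hcon.1 hcon.2 hmem)
      refine ⟨min x y, by omega, ?_⟩
      rw [Prod.mk.injEq]
      constructor <;> omega
    · rintro ⟨t, ht, heq⟩
      have hmin : 1 ≤ min a b := by omega
      have hcc := hcorner (by omega) (by omega)
      have hm : (a - min a b + t, b - min a b + t) ∈ μ :=
        μ.up_left_mem (by omega) (by omega) hcc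
      cases heq
      exact ⟨hm, by push_cast; omega⟩
  rw [hset, Finset.card_image_of_injOn (fun t1 _ t2 _ h => by
    rw [Prod.mk.injEq] at h; omega), Finset.card_range]
  push_cast
  rfl

private lemma diag_card_three (μ ν : YoungDiagram) (v : ℕ × ℕ)
    (hnot : v ∉ μ) (hins : ν.cells = insert v μ.cells) :
    (if (v.2 : ℤ) - (v.1 : ℤ) = 0 then (1 : ℤ) else 0)
      + ((μ.cells.filter fun p => (p.2 : ℤ) - (p.1 : ℤ) = (v.2 : ℤ) - (v.1 : ℤ) - 1).card : ℤ)
      + ((μ.cells.filter fun p => (p.2 : ℤ) - (p.1 : ℤ) = (v.2 : ℤ) - (v.1 : ℤ) + 1).card : ℤ)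
      - 2 * ((μ.cells.filter fun p => (p.2 : ℤ) - (p.1 : ℤ) = (v.2 : ℤ) - (v.1 : ℤ)).card : ℤ)
      = 1 := by
  obtain ⟨a, b⟩ := v
  dsimp only
  have hvν : (a, b) ∈ ν := (YoungDiagram.mem_cells _).mp (by rw [hins]; exact Finset.mem_insert_self _ _)
  have hmem : ∀ x y : ℕ, x ≤ a → y ≤ b → ¬(x = a ∧ y = b) → (x, y) ∈ μ := by
    intro x y hx hy hne
    have h1 : (x, y) ∈ ν := ν.up_left_mem hx hy hvν
    have h2 : (x, y) ∈ ν.cells := (YoungDiagram.mem_cells _).mpr h1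
    rw [hins, Finset.mem_insert] at h2
    rcases h2 with h | h
    · rw [Prod.mk.injEq] at h; exact absurd h hne
    · exact (YoungDiagram.mem_cells _).mp h
  have e1 := diag_filter_card μ a b ((b : ℤ) - (a : ℤ)) rfl hnot
    (fun ha hb => hmem (a - 1) (b - 1) (by omega) (by omega) (by omega))
  have e2 := diag_filter_card μ a (b + 1) ((b : ℤ) - (a : ℤ) + 1) (by push_cast; ring)
    (fun h => hnot (μ.up_left_mem le_rfl (by omega) h))
    (fun ha _ => hmem (a - 1) b (by omega) le_rfl (by omega))
  have e3 := diag_filter_card μ (a + 1) b ((b : ℤ) - (a : ℤ) - 1) (by push_cast; ring)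
    (fun h => hnot (μ.up_left_mem (by omega) le_rfl h))
    (fun _ hb => hmem a (b - 1) le_rfl (by omega) (by omega))
  rw [e1, e2, e3]
  push_cast
  split_ifs <;> omega

private lemma Icc_one_succ (m : ℕ) : Finset.Icc 1 (m + 1) = insert (m + 1) (Finset.Icc 1 m) := by
  ext x; simp only [Finset.mem_Icc, Finset.mem_insert]; omega

private lemma dcount_succ {d n : ℕ} (t : UpDownTableau d n) (m : ℕ) (s : Fin d) (c : ℤ) :
    t.dcount (m + 1) s c = t.dcount m s c
      + (if t.adds (m + 1) = true ∧ (t.box (m + 1)).2 = s ∧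
          ((t.box (m + 1)).1.2 : ℤ) - ((t.box (m + 1)).1.1 : ℤ) = c then 1 else 0) := by
  unfold UpDownTableau.dcount
  rw [Icc_one_succ, Finset.filter_insert]
  split_ifs with h
  · rw [Finset.card_insert_of_notMem (fun hmem => by
      have := (Finset.mem_filter.mp hmem).1
      simp only [Finset.mem_Icc] at this; omega)]
    push_cast; ring
  · simp

private lemma dcount_eq {d n : ℕ} (t : UpDownTableau d n)
    (hadds : ∀ k, 1 ≤ k → k ≤ n → t.adds k = true) :
    ∀ m, m ≤ n → ∀ (s : Fin d) (c : ℤ), t.dcount m s c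
      = (((t.shape m s).cells.filter fun p => (p.2 : ℤ) - (p.1 : ℤ) = c).card : ℤ) := by
  intro m
  induction m with
  | zero =>
    intro _ s c
    unfold UpDownTableau.dcount
    rw [t.shape_zero]
    simp [Finset.Icc_eq_empty (show ¬(1:ℕ) ≤ 0 by omega)]
  | succ m ih =>
    intro hm s c
    have hadd := hadds (m + 1) (by omega) hm
    obtain ⟨hnot, hcells, hoth⟩ := t.step_add (m + 1) (by omega) hm hadd
    simp only [Nat.add_sub_cancel] at hnot hcells hoth
    rw [dcount_succ, ih (by omega)]
    by_cases hs : (t.box (m + 1)).2 = s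
    · subst hs
      rw [hcells, Finset.filter_insert]
      split_ifs with h1 h2 h3
      · rw [Finset.card_insert_of_notMem (fun hmem =>
          hnot ((YoungDiagram.mem_cells _).mp (Finset.mem_filter.mp hmem).1))]
        push_cast; ring
      · exact absurd h1.2.2 h2
      · exact absurd ⟨hadd, rfl, h3⟩ h1
      · simp
    · rw [hoth s (fun h => hs h.symm)]
      simp [hs]

private lemma step_sum {d n : ℕ} (t : UpDownTableau d n) (m : ℕ) (hm : m + 1 ≤ n) :
    (∑ s : Fin d, ((t.shape (m + 1) s).card : ℤ))
      = (∑ s : Fin d, ((t.shape m s).card : ℤ))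
        + (if t.adds (m + 1) then 1 else -1) := by
  cases h : t.adds (m + 1) with
  | true =>
    obtain ⟨hnot, hcells, hoth⟩ := t.step_add (m + 1) (by omega) hm h
    simp only [Nat.add_sub_cancel] at hnot hcells hoth
    have key : ∀ s : Fin d, ((t.shape (m + 1) s).card : ℤ)
        = ((t.shape m s).card : ℤ) + (if s = (t.box (m + 1)).2 then 1 else 0) := by
      intro s
      by_cases hs : s = (t.box (m + 1)).2
      · subst hs
        simp only [YoungDiagram.card]
        rw [hcells, Finset.card_insert_of_notMem
            (fun hmem => hnot ((YoungDiagram.mem_cells _).mp hmem))]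
        push_cast; simp
      · rw [hoth s hs]; simp [hs]
    rw [Finset.sum_congr rfl fun s _ => key s, Finset.sum_add_distrib]
    simp
  | false =>
    obtain ⟨hnot, hcells, hoth⟩ := t.step_remove (m + 1) (by omega) hm h
    simp only [Nat.add_sub_cancel] at hnot hcells hoth
    have key : ∀ s : Fin d, ((t.shape (m + 1) s).card : ℤ)
        = ((t.shape m s).card : ℤ) + (if s = (t.box (m + 1)).2 then -1 else 0) := by
      intro s
      by_cases hs : s = (t.box (m + 1)).2
      · subst hs
        have hcard : (t.shape m (t.box (m + 1)).2).card
            = (t.shape (m + 1) (t.box (m + 1)).2).card + 1 := by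
          simp only [YoungDiagram.card]
          rw [hcells, Finset.card_insert_of_notMem
            (fun hmem => hnot ((YoungDiagram.mem_cells _).mp hmem))]
        rw [if_pos rfl, hcard]; push_cast; ring
      · rw [hoth s hs]; simp [hs]
    rw [Finset.sum_congr rfl fun s _ => key s, Finset.sum_add_distrib]
    simp

private lemma tel_sum {d n : ℕ} (t : UpDownTableau d n) :
    ∀ m, m ≤ n → (∑ s : Fin d, ((t.shape m s).card : ℤ))
      = ∑ k ∈ Finset.Icc 1 m, (if t.adds k then (1 : ℤ) else -1) := by
  intro m
  induction m with
  | zero =>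
    intro _
    rw [t.shape_zero]
    simp [YoungDiagram.card, Finset.Icc_eq_empty (show ¬(1:ℕ) ≤ 0 by omega)]
  | succ m ih =>
    intro hm
    rw [step_sum t m hm, ih (by omega), Icc_one_succ,
        Finset.sum_insert (fun hmem => by simp only [Finset.mem_Icc] at hmem; omega)]
    ring

private lemma all_adds {d n : ℕ} (t : UpDownTableau d n)
    (hsize : (∑ s : Fin d, (t.shape n s).card) = n) :
    ∀ k, 1 ≤ k → k ≤ n → t.adds k = true := by
  have hsum : ∑ k ∈ Finset.Icc 1 n, (if t.adds k then (1 : ℤ) else -1) = n := by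
    rw [← tel_sum t n le_rfl]; exact_mod_cast hsize
  have hzero : ∑ k ∈ Finset.Icc 1 n, ((1 : ℤ) - (if t.adds k then (1 : ℤ) else -1)) = 0 := by
    rw [Finset.sum_sub_distrib, hsum, Finset.sum_const, Nat.card_Icc]
    simp
  have hnn : ∀ i ∈ Finset.Icc 1 n, (0 : ℤ) ≤ 1 - (if t.adds i then (1 : ℤ) else -1) := by
    intro i _; split_ifs <;> norm_num
  intro k hk1 hkn
  have hk := (Finset.sum_eq_zero_iff_of_nonneg hnn).mp hzero k (Finset.mem_Icc.mpr ⟨hk1, hkn⟩)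
  cases hb : t.adds k with
  | true => rfl
  | false => rw [hb] at hk; norm_num at hk


/-- if `λ` is a `d`-partition of `n` (so the updown tableau consists solely of
additions) then the associated integers `p_1, …, p_n` all vanish. -/
theorem updown_p_eq_zero_of_partition
    {d n : ℕ} (hd : 1 ≤ d) (t : UpDownTableau d n)
    (hsize : (∑ s : Fin d, (t.shape n s).card) = n) :
    ∀ k, 1 ≤ k → k ≤ n → t.p k = 0 := by
  have hadds := all_adds t hsize
  intro k hk1 hkn
  have ha := hadds k hk1 hkn
  obtain ⟨hnot, hcells, hoth⟩ := t.step_add k hk1 hkn ha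
  unfold UpDownTableau.p
  rw [if_pos ha]
  unfold UpDownTableau.gIdx UpDownTableau.diag
  simp only [dcount_eq t hadds (k - 1) (by omega)]
  linarith [diag_card_three (t.shape (k - 1) (t.box k).2) (t.shape k (t.box k).2)
    (t.box k).1 hnot hcells]
end

section
/- Let n ≥ 2, set c := −q^{−1}, and let a ∈ K be invertible and u ∈ K satisfy u·a ≠ 1, u·a ≠ −ρq, u ≠ a, and u + ρqa ≠ 0. In B_{d,n} set Q_{n−1}(a,u;c) := T_{n−1} + ((q − q^{−1})/(ρ^{−1}cua − 1))·1 + ((q − q^{−1})/(1 + qcua))·E_{n−1} and T_{n−1}(u,a) := T_{n−1} + ((q − q^{−1})u/(a − u))·1 + ((q − q^{−1})u/(u + ρqa))·E_{n−1}. Then for every element y ∈ B_{d,n} satisfying y X_{n−1} = a·y, one has y (u − X_n) Q_{n−1}(a,u;c) (cu X_{n−1} − ρ) = y (cu X_n − ρ) T_{n−1}(u,a) (u − X_{n−1}). -/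
open scoped BigOperators

variable {K : Type*} [Field K] {A : Type*} [Ring A] [Algebra K A]
  {d n : ℕ} {δ : ℕ → K} {ρ q : K} {v : Fin d → K}

/-!
Write `T = T_{n-1}`, `E = E_{n-1}`, `X = X_{n-1}`, so that `X_n = T X T`. Besides `y X = a y`
only four local relations enter: `T E = ρ⁻¹ E`, the quadratic relation
`T² = 1 + (q - q⁻¹) T - (q - q⁻¹) ρ⁻¹ E` (skein relation times `T`), and the relations
`X T X E = ρ E` and `X T X T = T X T X`, which propagate from `X_1` to every `X_i` by conjugating
with `T_i` and using the braid relations. With them, right multiplication keeps both sides in the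
span of `y, yT, yE, yTX, yTX², yX_n`: indeed `yX_n X = a yX_n`, `yX_n E = a⁻¹ yE`, and `yX_n T` is
computed from the quadratic relation. The denominators of the two middle factors are exactly those
that make the coefficient of `yE` vanish, after which comparing coefficients is an identity of
rational functions in `q, ρ, u, a`.
-/

section BraidConjugation

variable {M : Type*} [Monoid M] {s r x : M}

theorem braid_rel_of_conj (hsrs : s * r * s = r * s * r) (hxr : Commute x r)
    (hxs : x * s * x * s = s * x * s * x) :
    s * x * s * r * (s * x * s) * r = r * (s * x * s) * r * (s * x * s) :=
  calc s * x * s * r * (s * x * s) * r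
      = s * x * (s * r * s) * x * s * r := by simp only [mul_assoc]
    _ = s * (x * r) * s * r * x * s * r := by rw [hsrs]; simp only [mul_assoc]
    _ = s * r * x * s * (r * x) * s * r := by rw [hxr.eq]; simp only [mul_assoc]
    _ = s * r * x * s * x * (r * s * r) := by rw [← hxr.eq]; simp only [mul_assoc]
    _ = s * r * (x * s * x * s) * r * s := by rw [← hsrs]; simp only [mul_assoc]
    _ = (s * r * s) * x * s * x * r * s := by rw [hxs]; simp only [mul_assoc]
    _ = r * s * (r * x) * s * x * r * s := by rw [hsrs]; simp only [mul_assoc]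
    _ = r * s * x * r * s * (x * r) * s := by rw [← hxr.eq]; simp only [mul_assoc]
    _ = r * s * x * (r * s * r) * x * s := by rw [hxr.eq]; simp only [mul_assoc]
    _ = r * (s * x * s) * r * (s * x * s) := by rw [← hsrs]; simp only [mul_assoc]

end BraidConjugation

section UnwrapConjugation

variable {R : Type*} [CommSemiring R] {A : Type*} [Semiring A] [Algebra R A]
  {s r x e e' : A} {ρ : R}

theorem unwrap_rel_of_conj (hsrs : s * r * s = r * s * r) (hxr : Commute x r)
    (hrse' : r * s * e' = e * e') (hsre : s * r * e = e' * e) (he' : e' * e * e' = e')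
    (hxsxe : x * s * x * e = ρ • e) :
    s * x * s * r * (s * x * s) * e' = ρ • e' :=
  calc s * x * s * r * (s * x * s) * e'
      = s * x * (s * r * s) * x * s * e' := by simp only [mul_assoc]
    _ = s * (x * r) * s * r * x * s * e' := by rw [hsrs]; simp only [mul_assoc]
    _ = s * r * x * s * (r * x) * s * e' := by rw [hxr.eq]; simp only [mul_assoc]
    _ = s * r * x * s * x * (r * s * e') := by rw [← hxr.eq]; simp only [mul_assoc]
    _ = s * r * (x * s * x * e) * e' := by rw [hrse']; simp only [mul_assoc]
    _ = ρ • (s * r * e * e') := by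
      rw [hxsxe]; simp only [mul_smul_comm, smul_mul_assoc, mul_assoc]
    _ = ρ • e' := by rw [hsre, he']

end UnwrapConjugation

namespace CBMW

variable (B : CBMW K A d n δ ρ q v)

theorem X_succ {i : ℕ} (hi : 1 ≤ i) : B.X (i + 1) = B.T i * B.X i * B.T i := by
  obtain ⟨k, rfl⟩ := Nat.exists_eq_add_of_le' hi
  rfl

theorem commute_X_T {i j : ℕ} (hi : 1 ≤ i) (hij : i + 1 ≤ j) (hj : j ≤ n - 1) :
    Commute (B.X i) (B.T j) := by
  induction i, hi using Nat.le_induction generalizing j with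
  | base => exact B.XTcomm j hij hj
  | succ i hi ih =>
    have hTT : Commute (B.T i) (B.T j) := B.Tcomm i j hi hj (by omega)
    rw [B.X_succ hi]
    exact (hTT.mul_left (ih (by omega) hj)).mul_left hTT

theorem X_T_X_T_comm {i : ℕ} (hi : 1 ≤ i) (hin : i ≤ n - 1) :
    B.X i * B.T i * B.X i * B.T i = B.T i * B.X i * B.T i * B.X i := by
  induction i, hi using Nat.le_induction with
  | base => exact B.XTXT hin
  | succ i hi ih =>
    rw [B.X_succ hi]
    exact braid_rel_of_conj (B.braid i hi hin) (B.commute_X_T hi le_rfl hin) (ih (by omega))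

theorem X_T_X_E {i : ℕ} (hi : 1 ≤ i) (hin : i ≤ n - 1) :
    B.X i * B.T i * B.X i * B.E i = ρ • B.E i := by
  induction i, hi using Nat.le_induction with
  | base => exact B.unwrapr hin
  | succ i hi ih =>
    rw [B.X_succ hi]
    exact unwrap_rel_of_conj (B.braid i hi hin) (B.commute_X_T hi le_rfl hin)
      (B.TTEdown i hi hin) (B.TTEup i hi hin) (B.EEEdown i hi hin) (ih (by omega))

theorem T_mul_T {i : ℕ} (hi : 1 ≤ i) (hin : i ≤ n - 1) :
    B.T i * B.T i = 1 + (q - q⁻¹) • B.T i - ((q - q⁻¹) * ρ⁻¹) • B.E i := by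
  have hTinv : B.Tinv i = B.T i - (q - q⁻¹) • (1 - B.E i) := by
    rw [← B.skein i hi hin, sub_sub_cancel]
  calc B.T i * B.T i = B.T i * B.Tinv i + (q - q⁻¹) • (B.T i - B.T i * B.E i) := by
        rw [hTinv]; noncomm_ring
    _ = 1 + (q - q⁻¹) • B.T i - ((q - q⁻¹) * ρ⁻¹) • B.E i := by
        rw [B.TTinv i hi hin, B.TE i hi hin]; module

end CBMW

section FusionCoefficients

variable {K : Type*} [Field K] {q ρ a u : K}

theorem fusion_coeff_one_mul (hq : q ≠ 0) (hρ : ρ ≠ 0) (h2 : u * a ≠ -(ρ * q)) :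
    (q - q⁻¹) / (ρ⁻¹ * (-q⁻¹) * u * a - 1) * (-q⁻¹ * u * a + -ρ) = (q - q⁻¹) * ρ := by
  have hd : ρ⁻¹ * (-q⁻¹) * u * a - 1 ≠ 0 := by
    intro h
    apply h2
    field_simp at h
    linear_combination -h
  rw [show -q⁻¹ * u * a + -ρ = (ρ⁻¹ * (-q⁻¹) * u * a - 1) * ρ by field_simp; ring,
    ← mul_assoc, div_mul_cancel₀ _ hd]

theorem fusion_coeff_E_left_eq_zero (hq : q ≠ 0) (ha : a ≠ 0) (h1 : u * a ≠ 1) :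
    u * ((q - q⁻¹) / (1 + q * (-q⁻¹) * u * a))
      + -1 * a⁻¹ * ((q - q⁻¹) / (1 + q * (-q⁻¹) * u * a) - (q - q⁻¹)) = 0 := by
  have hua : 1 - u * a ≠ 0 := sub_ne_zero.mpr (Ne.symm h1)
  rw [show 1 + q * (-q⁻¹) * u * a = 1 - u * a by field_simp; ring]
  field_simp
  ring

theorem fusion_coeff_E_right_eq_zero (hq : q ≠ 0) (ha : a ≠ 0) (h4 : u + ρ * q * a ≠ 0) :
    -ρ * ((q - q⁻¹) * u / (u + ρ * q * a))
      + -q⁻¹ * u * a⁻¹ * ((q - q⁻¹) * u / (u + ρ * q * a) - (q - q⁻¹)) = 0 := by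
  field_simp
  ring

end FusionCoefficients

section LocalRelations

variable {K : Type*} [Field K] {A : Type*} [Ring A] [Algebra K A]
  {q ρ a : K} {T E X y : A}

theorem mul_T_X_E_of_mul_X (ha : a ≠ 0) (hXTXE : X * T * X * E = ρ • E)
    (hy : y * X = a • y) : y * T * X * E = (ρ * a⁻¹) • (y * E) := by
  have h : a • (y * T * X * E) = ρ • (y * E) := by
    rw [← smul_mul_assoc, ← smul_mul_assoc, ← smul_mul_assoc, ← hy]
    simp only [mul_assoc] at hXTXE ⊢
    rw [hXTXE, mul_smul_comm]
  rw [mul_comm, mul_smul, ← h, inv_smul_smul₀ ha]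

theorem mul_TXT_X_of_mul_X (hbraid : X * T * X * T = T * X * T * X) (hy : y * X = a • y) :
    y * (T * X * T) * X = a • (y * (T * X * T)) := by
  rw [mul_assoc, ← hbraid]
  simp only [← mul_assoc]
  rw [hy, smul_mul_assoc, smul_mul_assoc, smul_mul_assoc]

theorem mul_TXT_E_of_mul_X (hρ : ρ ≠ 0) (ha : a ≠ 0) (hTE : T * E = ρ⁻¹ • E)
    (hXTXE : X * T * X * E = ρ • E) (hy : y * X = a • y) :
    y * (T * X * T) * E = a⁻¹ • (y * E) := by
  calc y * (T * X * T) * E = y * T * X * (T * E) := by simp only [mul_assoc]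
    _ = a⁻¹ • (y * E) := by
      rw [hTE, mul_smul_comm, mul_T_X_E_of_mul_X ha hXTXE hy, smul_smul,
        inv_mul_cancel_left₀ hρ]

theorem mul_TXT_T_of_mul_X (hρ : ρ ≠ 0) (ha : a ≠ 0)
    (hTT : T * T = 1 + (q - q⁻¹) • T - ((q - q⁻¹) * ρ⁻¹) • E) (hXTXE : X * T * X * E = ρ • E)
    (hy : y * X = a • y) :
    y * (T * X * T) * T
      = y * T * X + (q - q⁻¹) • (y * (T * X * T)) - ((q - q⁻¹) * a⁻¹) • (y * E) := by
  calc y * (T * X * T) * T = y * T * X * (T * T) := by simp only [mul_assoc]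
    _ = _ := by
      rw [hTT, mul_sub, mul_add, mul_smul_comm, mul_smul_comm, mul_T_X_E_of_mul_X ha hXTXE hy,
        mul_one, smul_smul, ← mul_assoc _ ρ, inv_mul_cancel_right₀ hρ]
      simp only [mul_assoc]

theorem mul_T_add_smul_one_add_smul_E (hρ : ρ ≠ 0) (ha : a ≠ 0)
    (hTT : T * T = 1 + (q - q⁻¹) • T - ((q - q⁻¹) * ρ⁻¹) • E) (hTE : T * E = ρ⁻¹ • E)
    (hXTXE : X * T * X * E = ρ • E) (hy : y * X = a • y) (α β γ ε : K) :
    (α • y + β • (y * (T * X * T))) * (T + γ • (1 : A) + ε • E)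
      = (α * γ) • y + α • (y * T) + (α * ε + β * a⁻¹ * (ε - (q - q⁻¹))) • (y * E)
        + β • (y * T * X) + (β * ((q - q⁻¹) + γ)) • (y * (T * X * T)) := by
  simp only [add_mul, mul_add, smul_mul_assoc, mul_smul_comm, mul_one]
  rw [mul_TXT_T_of_mul_X hρ ha hTT hXTXE hy, mul_TXT_E_of_mul_X hρ ha hTE hXTXE hy]
  match_scalars <;> ring

theorem mul_smul_X_add_smul_one (hbraid : X * T * X * T = T * X * T * X)
    (hy : y * X = a • y) (α μ β ν l κ : K) :
    (α • y + μ • (y * T) + β • (y * T * X) + ν • (y * (T * X * T))) * (l • X + κ • (1 : A))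
      = (α * (l * a + κ)) • y + (μ * κ) • (y * T) + (μ * l + β * κ) • (y * T * X)
        + (β * l) • (y * T * X * X) + (ν * (l * a + κ)) • (y * (T * X * T)) := by
  simp only [add_mul, mul_add, smul_mul_assoc, mul_smul_comm, mul_one]
  rw [hy, mul_TXT_X_of_mul_X hbraid hy]
  match_scalars <;> ring

theorem fusion_identity_of_relations (hq : q ≠ 0) (hρ : ρ ≠ 0) (ha : a ≠ 0) {u : K}
    (h1 : u * a ≠ 1) (h2 : u * a ≠ -(ρ * q)) (h3 : u ≠ a) (h4 : u + ρ * q * a ≠ 0)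
    (hTT : T * T = 1 + (q - q⁻¹) • T - ((q - q⁻¹) * ρ⁻¹) • E) (hTE : T * E = ρ⁻¹ • E)
    (hXTXE : X * T * X * E = ρ • E) (hbraid : X * T * X * T = T * X * T * X)
    (hy : y * X = a • y) :
    y * (algebraMap K A u - T * X * T) *
        (T + ((q - q⁻¹) / (ρ⁻¹ * (-q⁻¹) * u * a - 1)) • (1 : A)
          + ((q - q⁻¹) / (1 + q * (-q⁻¹) * u * a)) • E) *
        (((-q⁻¹) * u) • X - algebraMap K A ρ)
      = y * (((-q⁻¹) * u) • (T * X * T) - algebraMap K A ρ) *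
          (T + ((q - q⁻¹) * u / (a - u)) • (1 : A)
            + ((q - q⁻¹) * u / (u + ρ * q * a)) • E) *
          (algebraMap K A u - X) := by
  have hleft : y * (algebraMap K A u - T * X * T) = u • y + (-1 : K) • (y * (T * X * T)) := by
    rw [Algebra.algebraMap_eq_smul_one, mul_sub, mul_smul_comm, mul_one]; module
  have hright : y * (((-q⁻¹) * u) • (T * X * T) - algebraMap K A ρ)
      = (-ρ) • y + ((-q⁻¹) * u) • (y * (T * X * T)) := by
    rw [Algebra.algebraMap_eq_smul_one, mul_sub, mul_smul_comm, mul_smul_comm, mul_one]; module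
  have hXleft : ((-q⁻¹) * u) • X - algebraMap K A ρ = ((-q⁻¹) * u) • X + (-ρ) • (1 : A) := by
    rw [Algebra.algebraMap_eq_smul_one]; module
  have hXright : algebraMap K A u - X = (-1 : K) • X + u • (1 : A) := by
    rw [Algebra.algebraMap_eq_smul_one]; module
  rw [hleft, hright, hXleft, hXright,
    mul_T_add_smul_one_add_smul_E hρ ha hTT hTE hXTXE hy, fusion_coeff_E_left_eq_zero hq ha h1,
    mul_T_add_smul_one_add_smul_E hρ ha hTT hTE hXTXE hy, fusion_coeff_E_right_eq_zero hq ha h4,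
    zero_smul, add_zero, add_zero,
    mul_smul_X_add_smul_one hbraid hy, mul_smul_X_add_smul_one hbraid hy]
  have hα := fusion_coeff_one_mul hq hρ h2
  have hα' : (q - q⁻¹) * u / (a - u) * (a - u) = (q - q⁻¹) * u :=
    div_mul_cancel₀ _ (sub_ne_zero.mpr h3.symm)
  match_scalars
  · linear_combination u * hα - ρ * hα'
  · ring
  · ring
  · ring
  · linear_combination -hα - q⁻¹ * u * hα'

end LocalRelations

/-- the key commutation identity behind the fusion procedure for the
cyclotomic BMW algebra, with `c = -q⁻¹`. -/
theorem cbmw_fusion_key_identity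
    {K : Type*} [Field K] {A : Type*} [Ring A] [Algebra K A]
    {d n : ℕ} {δ : ℕ → K} {ρ q : K} {v : Fin d → K}
    (B : CBMW K A d n δ ρ q v) (hn : 2 ≤ n)
    (a u : K) (ha : a ≠ 0)
    (h1 : u * a ≠ 1) (h2 : u * a ≠ -(ρ * q)) (h3 : u ≠ a) (h4 : u + ρ * q * a ≠ 0)
    (y : A) (hy : y * B.X (n - 1) = a • y) :
    y * (algebraMap K A u - B.X n) *
        (B.T (n - 1) + ((q - q⁻¹) / (ρ⁻¹ * (-q⁻¹) * u * a - 1)) • (1 : A)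
          + ((q - q⁻¹) / (1 + q * (-q⁻¹) * u * a)) • B.E (n - 1)) *
        (((-q⁻¹) * u) • B.X (n - 1) - algebraMap K A ρ)
      = y * (((-q⁻¹) * u) • B.X n - algebraMap K A ρ) *
          (B.T (n - 1) + ((q - q⁻¹) * u / (a - u)) • (1 : A)
            + ((q - q⁻¹) * u / (u + ρ * q * a)) • B.E (n - 1)) *
          (algebraMap K A u - B.X (n - 1)) := by
  have hi : 1 ≤ n - 1 := by omega
  have hXn : B.X n = B.T (n - 1) * B.X (n - 1) * B.T (n - 1) := by
    rw [← B.X_succ hi, Nat.sub_add_cancel (by omega)]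
  rw [hXn]
  exact fusion_identity_of_relations B.q_ne B.rho_ne ha h1 h2 h3 h4 (B.T_mul_T hi le_rfl)
    (B.TE _ hi le_rfl) (B.X_T_X_E hi le_rfl) (B.X_T_X_T_comm hi le_rfl) hy
end

section
/- Let u, v ∈ K with u ≠ v, v − u + ω_0/2 − 1 ≠ 0 and u − v + ω_0/2 − 1 ≠ 0, and for 1 ≤ i ≤ n−1 set S_i(u,v) := S_i + (1/(v − u))·1 − (1/(v − u + ω_0/2 − 1))·E_i in the cyclotomic Nazarov–Wenzl algebra W_{d,n}. Then S_i(u,v)·S_i(v,u) = ((u − v + 1)(u − v − 1)/(u − v)²)·1. -/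
/-!
The relations `S_i² = 1`, `S_iE_i = E_iS_i = E_i` and `E_i² = ω_0E_i` make the span of
`1, S_i, E_i` closed under multiplication, so the product of two elements `S_i + a - bE_i` is
again a combination of `1, S_i, E_i`. For the Baxterized pair, `1/(v - u) = -1/(u - v)` kills the
`S_i`-coefficient, and the choice of the `E_i`-coefficients `1/(±(v - u) + ω_0/2 - 1)` is exactly
what makes the `E_i`-coefficient vanish. What remains is `1 - 1/(u - v)²`.
-/

open scoped BigOperators

/-- The cyclotomic Nazarov–Wenzl algebra data: elements of a `K`-algebra `A` satisfying
the defining relations of `W_{d,n}`. -/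
structure CNW (K : Type*) [Field K] (A : Type*) [Ring A] [Algebra K A]
    (d n : ℕ) (ω : ℕ → K) (v : Fin d → K) where
  S : ℕ → A
  E : ℕ → A
  X : ℕ → A
  two_ne : (2 : K) ≠ 0
  Ssq : ∀ i, 1 ≤ i → i ≤ n - 1 → S i * S i = 1
  Esq : ∀ i, 1 ≤ i → i ≤ n - 1 → E i * E i = ω 0 • E i
  braid : ∀ i, 1 ≤ i → i + 1 ≤ n - 1 → S i * S (i + 1) * S i = S (i + 1) * S i * S (i + 1)
  Scomm : ∀ i j, 1 ≤ i → j ≤ n - 1 → i + 2 ≤ j → S i * S j = S j * S i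
  SXcomm : ∀ i j, 1 ≤ i → i ≤ n - 1 → 1 ≤ j → j ≤ n → j ≠ i → j ≠ i + 1 →
    S i * X j = X j * S i
  EEEup : ∀ i, 1 ≤ i → i + 1 ≤ n - 1 → E i * E (i + 1) * E i = E i
  EEEdown : ∀ i, 1 ≤ i → i + 1 ≤ n - 1 → E (i + 1) * E i * E (i + 1) = E (i + 1)
  SSEup : ∀ i, 1 ≤ i → i + 1 ≤ n - 1 → S i * S (i + 1) * E i = E (i + 1) * E i
  SSEdown : ∀ i, 1 ≤ i → i + 1 ≤ n - 1 → S (i + 1) * S i * E (i + 1) = E i * E (i + 1)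
  ESSup : ∀ i, 1 ≤ i → i + 1 ≤ n - 1 → E i * S (i + 1) * S i = E i * E (i + 1)
  ESSdown : ∀ i, 1 ≤ i → i + 1 ≤ n - 1 → E (i + 1) * S i * S (i + 1) = E (i + 1) * E i
  EXE : ∀ k, 1 ≤ k → k ≤ d - 1 → E 1 * X 1 ^ k * E 1 = ω k • E 1
  SE : ∀ i, 1 ≤ i → i ≤ n - 1 → S i * E i = E i
  ES : ∀ i, 1 ≤ i → i ≤ n - 1 → E i * S i = E i
  skein : ∀ i, 1 ≤ i → i ≤ n - 1 → S i * X i - X (i + 1) * S i = E i - 1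
  antisymL : ∀ i, 1 ≤ i → i ≤ n - 1 → E i * (X i + X (i + 1)) = 0
  antisymR : ∀ i, 1 ≤ i → i ≤ n - 1 → (X i + X (i + 1)) * E i = 0
  SEcomm : ∀ i j, 1 ≤ i → j ≤ n - 1 → i + 2 ≤ j → S i * E j = E j * S i
  EScomm : ∀ i j, 1 ≤ i → j ≤ n - 1 → i + 2 ≤ j → E i * S j = S j * E i
  EEcomm : ∀ i j, 1 ≤ i → j ≤ n - 1 → i + 2 ≤ j → E i * E j = E j * E i
  EXcomm : ∀ i j, 1 ≤ i → i ≤ n - 1 → 1 ≤ j → j ≤ n → j ≠ i → j ≠ i + 1 →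
    E i * X j = X j * E i
  XXcomm : ∀ i j, 1 ≤ i → i ≤ n → 1 ≤ j → j ≤ n → X i * X j = X j * X i
  cyclo : (List.ofFn fun i : Fin d => X 1 - algebraMap K A (v i)).prod = 0

section Baxterized

variable {K A : Type*} [Field K] [Ring A] [Algebra K A]

theorem mul_eq_of_involution_of_absorbing {s e : A} {w : K} (hs : s * s = 1) (hse : s * e = e)
    (hes : e * s = e) (he : e * e = w • e) (a b a' b' : K) :
    (s + a • (1 : A) - b • e) * (s + a' • (1 : A) - b' • e) =
      (1 + a * a') • (1 : A) + (a + a') • s + (b * b' * w - b - b' - a * b' - a' * b) • e := by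
  simp only [mul_add, add_mul, sub_mul, mul_sub, smul_mul_assoc, mul_smul_comm, smul_smul,
    one_mul, mul_one, hs, hse, hes, he]
  module

theorem one_div_sub_add_one_div_sub (u v : K) : 1 / (v - u) + 1 / (u - v) = 0 := by
  rw [← neg_sub u v, div_neg, neg_add_cancel]

theorem baxterized_coeff_eq_zero {u v w : K} (two_ne : (2 : K) ≠ 0) (huv : u ≠ v)
    (h1 : v - u + w / 2 - 1 ≠ 0) (h2 : u - v + w / 2 - 1 ≠ 0) :
    1 / (v - u + w / 2 - 1) * (1 / (u - v + w / 2 - 1)) * w - 1 / (v - u + w / 2 - 1)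
      - 1 / (u - v + w / 2 - 1) - 1 / (v - u) * (1 / (u - v + w / 2 - 1))
      - 1 / (u - v) * (1 / (v - u + w / 2 - 1)) = 0 := by
  have hvu : v - u ≠ 0 := sub_ne_zero.mpr huv.symm
  have huv' : u - v ≠ 0 := sub_ne_zero.mpr huv
  obtain ⟨t, rfl⟩ : ∃ t, w = 2 * t := ⟨w / 2, (mul_div_cancel₀ w two_ne).symm⟩
  rw [mul_div_cancel_left₀ t two_ne] at *
  field_simp
  ring

theorem one_add_one_div_sub_mul_one_div_sub {u v : K} (huv : u ≠ v) :
    1 + 1 / (v - u) * (1 / (u - v)) = (u - v + 1) * (u - v - 1) / (u - v) ^ 2 := by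
  have hvu : v - u ≠ 0 := sub_ne_zero.mpr huv.symm
  have huv' : u - v ≠ 0 := sub_ne_zero.mpr huv
  field_simp
  ring

end Baxterized

/-- the Baxterized elements `S_i(u,v)` of the cyclotomic Nazarov–Wenzl algebra
satisfy `S_i(u,v) S_i(v,u) = ((u - v + 1)(u - v - 1)/(u - v)²) · 1`. -/
theorem cnw_baxterized_inverse
    {K : Type*} [Field K] {A : Type*} [Ring A] [Algebra K A]
    {d n : ℕ} {ω : ℕ → K} {vv : Fin d → K}
    (B : CNW K A d n ω vv)
    (i : ℕ) (hi1 : 1 ≤ i) (hin : i ≤ n - 1)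
    (u v : K) (huv : u ≠ v)
    (h1 : v - u + ω 0 / 2 - 1 ≠ 0) (h2 : u - v + ω 0 / 2 - 1 ≠ 0) :
    (B.S i + (1 / (v - u)) • (1 : A) - (1 / (v - u + ω 0 / 2 - 1)) • B.E i) *
      (B.S i + (1 / (u - v)) • (1 : A) - (1 / (u - v + ω 0 / 2 - 1)) • B.E i)
      = ((u - v + 1) * (u - v - 1) / (u - v) ^ 2) • (1 : A) := by
  rw [mul_eq_of_involution_of_absorbing (B.Ssq i hi1 hin) (B.SE i hi1 hin) (B.ES i hi1 hin)
      (B.Esq i hi1 hin), baxterized_coeff_eq_zero B.two_ne huv h1 h2, one_div_sub_add_one_div_sub,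
    one_add_one_div_sub_mul_one_div_sub huv, zero_smul, zero_smul, add_zero, add_zero]
end

section
/- Let n ≥ 2, set c := 1 − ω_0/2, and let a, u ∈ K satisfy a + u + c ≠ 0, a + u ≠ 0, a ≠ u, and a − u + ω_0/2 − 1 ≠ 0. In W_{d,n} set R_{n−1}(a,u;c) := S_{n−1} + (1/(a + u + c))·1 − (1/(a + u))·E_{n−1} and S_{n−1}(u,a) := S_{n−1} + (1/(a − u))·1 − (1/(a − u + ω_0/2 − 1))·E_{n−1}. Then for every element y ∈ W_{d,n} satisfying y X_{n−1} = a·y, one has y (u − X_n) R_{n−1}(a,u;c) (u + X_{n−1} + c) = y (u + X_n + c) S_{n−1}(u,a) (u − X_{n−1}). -/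
open scoped BigOperators

/-- the key commutation identity behind the fusion procedure for the
cyclotomic Nazarov–Wenzl algebra, with `c = 1 - ω₀/2`. -/
theorem cnw_fusion_key_identity
    {K : Type*} [Field K] {A : Type*} [Ring A] [Algebra K A]
    {d n : ℕ} {ω : ℕ → K} {v : Fin d → K}
    (B : CNW K A d n ω v) (hn : 2 ≤ n)
    (a u : K)
    (h1 : a + u + (1 - ω 0 / 2) ≠ 0) (h2 : a + u ≠ 0) (h3 : a ≠ u)
    (h4 : a - u + ω 0 / 2 - 1 ≠ 0)
    (y : A) (hy : y * B.X (n - 1) = a • y) :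
    y * (algebraMap K A u - B.X n) *
        (B.S (n - 1) + (1 / (a + u + (1 - ω 0 / 2))) • (1 : A) - (1 / (a + u)) • B.E (n - 1)) *
        (algebraMap K A u + B.X (n - 1) + algebraMap K A (1 - ω 0 / 2))
      = y * (algebraMap K A u + B.X n + algebraMap K A (1 - ω 0 / 2)) *
          (B.S (n - 1) + (1 / (a - u)) • (1 : A)
            - (1 / (a - u + ω 0 / 2 - 1)) • B.E (n - 1)) *
          (algebraMap K A u - B.X (n - 1)) := by
  have hip : n - 1 + 1 = n := by omega
  have hi1 : 1 ≤ n - 1 := by omega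
  have hskein := B.skein (n-1) hi1 le_rfl
  have hL := B.antisymL (n-1) hi1 le_rfl
  have hR := B.antisymR (n-1) hi1 le_rfl
  have hXX := B.XXcomm (n-1) n hi1 (by omega) (by omega) le_rfl
  rw [hip] at hskein hL hR
  set S := B.S (n-1) with hSdef
  set E := B.E (n-1) with hEdef
  set Xi := B.X (n-1) with hXidef
  set Xn := B.X n with hXndef
  have k2 : S * Xi = Xn * S + E - 1 := by
    rw [sub_eq_iff_eq_add] at hskein
    rw [hskein]; abel
  have k3 : E * Xi = -(E * Xn) := by
    rw [mul_add, add_eq_zero_iff_eq_neg] at hL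
    exact hL
  have k4 : Xn * E = -(Xi * E) := by
    rw [add_mul, add_eq_zero_iff_neg_eq] at hR
    exact hR.symm
  have e2 : y * Xn * Xi = a • (y * Xn) := by
    rw [mul_assoc, ← hXX, ← mul_assoc, hy, smul_mul_assoc]
  have e3 : y * S * Xi = y * Xn * S + y * E - y := by
    rw [mul_assoc, k2]; noncomm_ring
  have e5 : y * E * Xi = -(y * E * Xn) := by
    rw [mul_assoc, k3]; noncomm_ring
  have e6 : y * Xn * E = -(a • (y * E)) := by
    rw [mul_assoc, k4, mul_neg, ← mul_assoc, hy, smul_mul_assoc]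
  have e4 : y * Xn * S * Xi = y * Xn * Xn * S - a • (y * E) - y * Xn := by
    rw [mul_assoc (y * Xn), k2, mul_sub, mul_add, mul_one, ← mul_assoc, e6]
    abel
  have e7 : y * Xn * E * Xi = a • (y * E * Xn) := by
    rw [e6, neg_mul, smul_mul_assoc, e5]
    simp
  have h3' : a - u ≠ 0 := sub_ne_zero.mpr h3
  simp only [Algebra.algebraMap_eq_smul_one]
  simp only [mul_add, add_mul, mul_sub, sub_mul, smul_mul_assoc, mul_smul_comm,
    mul_one, one_mul]
  simp only [e4, e7, e3, e6, e5, e2, hy, neg_mul, smul_mul_assoc, smul_neg, neg_neg, mul_neg]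
  match_scalars <;> (field_simp <;> ring)
end
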